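/- Let u = u(t,x) be a smooth solution of the Novikov equation u_t + u²u_x + ∂ₓP₁ + P₂ = 0 on an open set of (t,x), with u(t,·) ∈ H¹(ℝ) ∩ W^{1,4}(ℝ) for each t. Then the local conservation law ∂_t[ u⁴ + 2u²u_x² − (1/3)u_x⁴ ] + ∂_x[ 2u⁴u_x² − (1/3)u²u_x⁴ + (4/3)u³(P₁ + ∂ₓP₂) ] + (4/3) ∂_x[ (P₁ + ∂ₓP₂)² − (P₂ + ∂ₓP₁)² ] = 0 holds pointwise. -/

import Mathlib

open MeasureTheory Set
open scoped Topology

noncomputable section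

/-- The kernel `p(x) = (1/2) e^{-|x|}`. -/
def pker (x : ℝ) : ℝ := (1/2) * Real.exp (-|x|)

/-- The (a.e.) derivative of the kernel `p`. -/
def pker' (x : ℝ) : ℝ := -(1/2) * Real.sign x * Real.exp (-|x|)

/-- The spatial derivative `u_x` of `u`. -/
def uX (u : ℝ → ℝ → ℝ) (t x : ℝ) : ℝ := deriv (u t) x

/-- `P₁ = p ∗ ((3/2) u u_x² + u³)` (convolution in the space variable). -/
def NvP1 (u : ℝ → ℝ → ℝ) (t x : ℝ) : ℝ :=
  ∫ y, pker (x - y) * ((3/2) * u t y * (uX u t y)^2 + (u t y)^3)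

/-- `∂ₓP₁ = (∂ₓp) ∗ ((3/2) u u_x² + u³)`. -/
def NvdP1 (u : ℝ → ℝ → ℝ) (t x : ℝ) : ℝ :=
  ∫ y, pker' (x - y) * ((3/2) * u t y * (uX u t y)^2 + (u t y)^3)

/-- `P₂ = (1/2) p ∗ u_x³`. -/
def NvP2 (u : ℝ → ℝ → ℝ) (t x : ℝ) : ℝ :=
  (1/2) * ∫ y, pker (x - y) * (uX u t y)^3

/-- `∂ₓP₂ = (1/2) (∂ₓp) ∗ u_x³`. -/
def NvdP2 (u : ℝ → ℝ → ℝ) (t x : ℝ) : ℝ :=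
  (1/2) * ∫ y, pker' (x - y) * (uX u t y)^3

/-- `u` is a smooth solution of the Novikov equation
`u_t + u² u_x + ∂ₓP₁ + P₂ = 0` on the open set `U ⊆ ℝ × ℝ`, with
`u(t,·) ∈ H¹(ℝ) ∩ W^{1,4}(ℝ)` for each `t` (so that `P₁` and `P₂` are defined). -/
structure NovikovSmoothSol (U : Set (ℝ × ℝ)) (u : ℝ → ℝ → ℝ) : Prop where
  open_U : IsOpen U
  smooth : ContDiffOn ℝ (⊤ : ℕ∞) (fun q : ℝ × ℝ => u q.1 q.2) U
  mem_L2 : ∀ t : ℝ, MemLp (u t) 2 volume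
  mem_L2x : ∀ t : ℝ, MemLp (uX u t) 2 volume
  mem_L4 : ∀ t : ℝ, MemLp (u t) 4 volume
  mem_L4x : ∀ t : ℝ, MemLp (uX u t) 4 volume
  eqn : ∀ t x : ℝ, (t, x) ∈ U →
    deriv (fun s => u s x) t + (u t x)^2 * uX u t x + NvdP1 u t x + NvP2 u t x = 0

open Metric Filter
open scoped ENNReal

lemma continuous_pker : Continuous pker := by
  unfold pker; fun_prop

lemma measurable_pker' : Measurable pker' := by
  have hs : Measurable Real.sign := by
    unfold Real.sign
    exact Measurable.ite (measurableSet_lt measurable_id measurable_const) measurable_const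
      (Measurable.ite (measurableSet_lt measurable_const measurable_id) measurable_const
        measurable_const)
  unfold pker'
  exact (measurable_const.mul hs).mul ((measurable_id.abs.neg).exp)

lemma abs_pker_le (z : ℝ) : |pker z| ≤ 1/2 := by
  unfold pker
  rw [abs_mul, abs_of_nonneg (le_of_lt (Real.exp_pos _))]
  have h1 : Real.exp (-|z|) ≤ 1 := Real.exp_le_one_iff.2 (neg_nonpos.2 (abs_nonneg _))
  rw [abs_of_nonneg (by norm_num : (0:ℝ) ≤ 1/2)]
  nlinarith [Real.exp_pos (-|z|)]

lemma abs_pker'_le (z : ℝ) : |pker' z| ≤ 1/2 := by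
  unfold pker'
  have h1 : Real.exp (-|z|) ≤ 1 := Real.exp_le_one_iff.2 (neg_nonpos.2 (abs_nonneg _))
  have h2 : |Real.sign z| ≤ 1 := by
    rcases Real.sign_apply_eq z with h | h | h <;> rw [h] <;> norm_num
  rw [abs_mul, abs_mul]
  have := Real.exp_pos (-|z|)
  rw [abs_of_nonneg (le_of_lt this)]
  rw [show |(-(1/2):ℝ)| = 1/2 by norm_num]
  nlinarith [abs_nonneg (Real.sign z)]

lemma pker_lip (a b : ℝ) : |pker a - pker b| ≤ (1/2) * |a - b| := by
  unfold pker
  rw [← mul_sub, abs_mul, abs_of_nonneg (by norm_num : (0:ℝ) ≤ 1/2)]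
  have key : |Real.exp (-|a|) - Real.exp (-|b|)| ≤ |a - b| := by
    wlog h : |b| ≤ |a| generalizing a b
    · rw [abs_sub_comm, abs_sub_comm a b]; exact this b a (le_of_not_ge h)
    have h1 : Real.exp (-|a|) ≤ Real.exp (-|b|) := Real.exp_le_exp.2 (by linarith)
    have h2 : Real.exp (-|b|) ≤ 1 := Real.exp_le_one_iff.2 (neg_nonpos.2 (abs_nonneg _))
    have h3 : Real.exp (-|a|) = Real.exp (-|b|) * Real.exp (|b| - |a|) := by
      rw [← Real.exp_add]; ring_nf
    have h4 : 1 - (|a| - |b|) ≤ Real.exp (|b| - |a|) := by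
      have := Real.add_one_le_exp (|b| - |a|); linarith
    have h5 : |a| - |b| ≤ |a - b| := abs_sub_abs_le_abs_sub a b
    rw [abs_of_nonpos (by linarith)]
    nlinarith [Real.exp_pos (-|b|)]
  nlinarith [abs_nonneg (a - b)]

lemma hasDerivAt_pker {z : ℝ} (hz : z ≠ 0) : HasDerivAt pker (pker' z) z := by
  have habs : HasDerivAt (fun w : ℝ => |w|) (Real.sign z) z := by
    have := hasDerivAt_abs hz
    have hsgn : ((SignType.sign z : ℝ)) = Real.sign z := by
      rcases hz.lt_or_gt with h | h
      · simp [h, Real.sign_of_neg h]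
      · simp [h, Real.sign_of_pos h]
    rw [← hsgn]; exact this
  have h1 : HasDerivAt (fun w : ℝ => Real.exp (-|w|)) (Real.exp (-|z|) * (-Real.sign z)) z :=
    HasDerivAt.exp (habs.neg : HasDerivAt (fun w : ℝ => -|w|) (-Real.sign z) z)
  have h2 := h1.const_mul (1/2 : ℝ)
  have e : pker' z = 1/2 * (Real.exp (-|z|) * -Real.sign z) := by unfold pker'; ring
  rw [e]; exact h2

lemma conv_integrable {φ : ℝ → ℝ} (hint : Integrable φ) (x : ℝ) :
    Integrable (fun y => pker (x - y) * φ y) := by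
  refine hint.bdd_mul ?_ (c := 1/2) (Eventually.of_forall fun y => ?_)
  · exact (continuous_pker.comp (continuous_const.sub continuous_id)).aestronglyMeasurable
  · simpa [Real.norm_eq_abs] using abs_pker_le (x - y)

lemma conv'_integrable {φ : ℝ → ℝ} (hint : Integrable φ) (x : ℝ) :
    Integrable (fun y => pker' (x - y) * φ y) := by
  refine hint.bdd_mul ?_ (c := 1/2) (Eventually.of_forall fun y => ?_)
  · exact ((measurable_pker'.comp (measurable_const.sub measurable_id)).aestronglyMeasurable)
  · simpa [Real.norm_eq_abs] using abs_pker'_le (x - y)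

lemma ae_ne (x₀ : ℝ) : ∀ᵐ y : ℝ, y ≠ x₀ := by
  have : (volume : Measure ℝ) {x₀} = 0 := measure_singleton _
  rw [ae_iff]
  convert this using 2
  ext y; simp

lemma conv_hasDerivAt {φ : ℝ → ℝ} (hint : Integrable φ) (x₀ : ℝ) :
    HasDerivAt (fun x => ∫ y, pker (x - y) * φ y) (∫ y, pker' (x₀ - y) * φ y) x₀ := by
  have key := hasDerivAt_integral_of_dominated_loc_of_lip
    (F := fun x y => pker (x - y) * φ y) (F' := fun y => pker' (x₀ - y) * φ y)
    (x₀ := x₀) (s := ball x₀ 1) (bound := fun y => (1/2) * |φ y|) (ball_mem_nhds x₀ one_pos)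
    (Eventually.of_forall fun x =>
      ((continuous_pker.comp (continuous_const.sub continuous_id)).aestronglyMeasurable).mul
        hint.1)
    (conv_integrable hint x₀)
    ((conv'_integrable hint x₀).1)
    ?_ ((hint.abs.const_mul (1/2))) ?_
  · exact key.2
  · refine Eventually.of_forall fun y => LipschitzWith.lipschitzOnWith ?_
    refine LipschitzWith.of_dist_le_mul fun a b => ?_
    rw [Real.dist_eq, Real.dist_eq, Real.coe_nnabs]
    have : pker (a - y) * φ y - pker (b - y) * φ y = (pker (a - y) - pker (b - y)) * φ y := by ring
    rw [this, abs_mul, abs_of_nonneg (by positivity : (0:ℝ) ≤ (1/2) * |φ y|)]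
    have h1 := pker_lip (a - y) (b - y)
    have h2 : a - y - (b - y) = a - b := by ring
    rw [h2] at h1
    nlinarith [abs_nonneg (φ y), abs_nonneg (a - b)]
  · filter_upwards [ae_ne x₀] with y hy
    have hz : x₀ - y ≠ 0 := sub_ne_zero.mpr (Ne.symm hy)
    have h1 : HasDerivAt (fun x => x - y) 1 x₀ := (hasDerivAt_id x₀).sub_const y
    have h2 := (hasDerivAt_pker hz).comp x₀ h1
    simpa using h2.mul_const (φ y)

lemma pker_right {z : ℝ} (hz : 0 ≤ z) : pker z = (1/2) * Real.exp (-z) := by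
  unfold pker; rw [abs_of_nonneg hz]
lemma pker_left {z : ℝ} (hz : z ≤ 0) : pker z = (1/2) * Real.exp z := by
  unfold pker; rw [abs_of_nonpos hz]; ring_nf
lemma pker'_right {z : ℝ} (hz : 0 < z) : pker' z = -(1/2) * Real.exp (-z) := by
  unfold pker'; rw [abs_of_pos hz, Real.sign_of_pos hz]; ring
lemma pker'_left {z : ℝ} (hz : z < 0) : pker' z = (1/2) * Real.exp z := by
  unfold pker'; rw [abs_of_neg hz, Real.sign_of_neg hz]; ring_nf

lemma conv'_hasDerivAt {φ : ℝ → ℝ} (hint : Integrable φ) (x₀ : ℝ) (hc : ContinuousAt φ x₀) :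
    HasDerivAt (fun x => ∫ y, pker' (x - y) * φ y)
      ((∫ y, pker (x₀ - y) * φ y) - φ x₀) x₀ := by
  set gA : ℝ → ℝ := fun y => Real.exp y * φ y with hgAdef
  set gB : ℝ → ℝ := fun y => Real.exp (-y) * φ y with hgBdef
  have hgAm : AEStronglyMeasurable gA volume :=
    (Real.continuous_exp.aestronglyMeasurable).mul hint.1
  have hgBm : AEStronglyMeasurable gB volume :=
    ((Real.continuous_exp.comp continuous_neg).aestronglyMeasurable).mul hint.1
  have hgA : ∀ b : ℝ, IntegrableOn gA (Iic b) volume := by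
    intro b
    refine Integrable.mono' ((hint.abs.const_mul (Real.exp b)).restrict)
      (hgAm.restrict) ?_
    rw [ae_restrict_iff' measurableSet_Iic]
    refine Eventually.of_forall fun y hy => ?_
    have h1 : Real.exp y ≤ Real.exp b := Real.exp_le_exp.2 hy
    rw [Real.norm_eq_abs, hgAdef]
    simp only
    rw [abs_mul, abs_of_nonneg (le_of_lt (Real.exp_pos y))]
    exact mul_le_mul_of_nonneg_right h1 (abs_nonneg _)
  have hgB : ∀ b : ℝ, IntegrableOn gB (Ioi b) volume := by
    intro b
    refine Integrable.mono' ((hint.abs.const_mul (Real.exp (-b))).restrict)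
      (hgBm.restrict) ?_
    rw [ae_restrict_iff' measurableSet_Ioi]
    refine Eventually.of_forall fun y hy => ?_
    have h1 : Real.exp (-y) ≤ Real.exp (-b) := Real.exp_le_exp.2 (by simp [le_of_lt (mem_Ioi.mp hy)])
    rw [Real.norm_eq_abs, hgBdef]
    simp only
    rw [abs_mul, abs_of_nonneg (le_of_lt (Real.exp_pos (-y)))]
    exact mul_le_mul_of_nonneg_right h1 (abs_nonneg _)
  set A : ℝ → ℝ := fun x => ∫ y in Iic x, gA y with hAdef
  set B : ℝ → ℝ := fun x => ∫ y in Ioi x, gB y with hBdef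
  -- splitting identities
  have claim_pker' : ∀ x : ℝ, (∫ y, pker' (x - y) * φ y)
      = (-(1/2) * Real.exp (-x)) * A x + ((1/2) * Real.exp x) * B x := by
    intro x
    rw [← intervalIntegral.integral_Iic_add_Ioi ((conv'_integrable hint x).integrableOn)
      ((conv'_integrable hint x).integrableOn)]
    congr 1
    · rw [hAdef]
      simp only
      rw [← integral_const_mul]
      refine setIntegral_congr_ae measurableSet_Iic ?_
      filter_upwards [ae_ne x] with y hy hyIic
      have hlt : y < x := lt_of_le_of_ne hyIic hy
      rw [pker'_right (by linarith : (0:ℝ) < x - y)]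
      rw [show -(x - y) = -x + y by ring, Real.exp_add, hgAdef]
      ring
    · rw [hBdef]
      simp only
      rw [← integral_const_mul]
      refine setIntegral_congr_ae measurableSet_Ioi ?_
      refine Eventually.of_forall fun y hy => ?_
      have hlt : x < y := hy
      rw [pker'_left (by linarith : x - y < 0)]
      rw [show x - y = x + -y by ring, Real.exp_add, hgBdef]
      ring
  have claim_pker : ∀ x : ℝ, (∫ y, pker (x - y) * φ y)
      = ((1/2) * Real.exp (-x)) * A x + ((1/2) * Real.exp x) * B x := by
    intro x
    rw [← intervalIntegral.integral_Iic_add_Ioi ((conv_integrable hint x).integrableOn)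
      ((conv_integrable hint x).integrableOn)]
    congr 1
    · rw [hAdef]
      simp only
      rw [← integral_const_mul]
      refine setIntegral_congr_ae measurableSet_Iic ?_
      refine Eventually.of_forall fun y hy => ?_
      rw [pker_right (by simp at hy; linarith : (0:ℝ) ≤ x - y)]
      rw [show -(x - y) = -x + y by ring, Real.exp_add, hgAdef]
      ring
    · rw [hBdef]
      simp only
      rw [← integral_const_mul]
      refine setIntegral_congr_ae measurableSet_Ioi ?_
      refine Eventually.of_forall fun y hy => ?_
      have hlt : x < y := hy
      rw [pker_left (by linarith : x - y ≤ 0)]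
      rw [show x - y = x + -y by ring, Real.exp_add, hgBdef]
      ring
  -- FTC for A
  have hsmA : StronglyMeasurableAtFilter gA (𝓝 x₀) volume :=
    ⟨univ, univ_mem, hgAm.restrict⟩
  have hsmB : StronglyMeasurableAtFilter gB (𝓝 x₀) volume :=
    ⟨univ, univ_mem, hgBm.restrict⟩
  have hiiA : IntervalIntegrable gA volume x₀ x₀ := by
    rw [intervalIntegrable_iff]; simp
  have hiiB : IntervalIntegrable gB volume x₀ x₀ := by
    rw [intervalIntegrable_iff]; simp
  have hcA : ContinuousAt gA x₀ := (Real.continuous_exp.continuousAt).mul hc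
  have hcB : ContinuousAt gB x₀ :=
    ((Real.continuous_exp.comp continuous_neg).continuousAt).mul hc
  have hA' : HasDerivAt A (gA x₀) x₀ := by
    have hftc := intervalIntegral.integral_hasDerivAt_right hiiA hsmA hcA
    have heq : ∀ x : ℝ, A x = A x₀ + ∫ y in x₀..x, gA y := by
      intro x
      have := intervalIntegral.integral_Iic_sub_Iic (hgA x₀) (hgA x)
      rw [hAdef]; simp only; linarith
    have : HasDerivAt (fun x => A x₀ + ∫ y in x₀..x, gA y) (gA x₀) x₀ := hftc.const_add _
    exact this.congr_of_eventuallyEq (Eventually.of_forall heq)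
  have hB' : HasDerivAt B (-(gB x₀)) x₀ := by
    have hftc := intervalIntegral.integral_hasDerivAt_right hiiB hsmB hcB
    have heq : ∀ x : ℝ, B x = B x₀ - ∫ y in x₀..x, gB y := by
      intro x
      rcases le_total x₀ x with hle | hle
      · have hsplit : (∫ y in Ioc x₀ x, gB y) + (∫ y in Ioi x, gB y) = ∫ y in Ioi x₀, gB y := by
          rw [← setIntegral_union (Ioc_disjoint_Ioi le_rfl) measurableSet_Ioi
            ((hgB x₀).mono_set Ioc_subset_Ioi_self) (hgB x), Ioc_union_Ioi_eq_Ioi hle]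
        have hint_eq : (∫ y in x₀..x, gB y) = ∫ y in Ioc x₀ x, gB y :=
          intervalIntegral.integral_of_le hle
        rw [hBdef]; simp only; linarith
      · have hsplit : (∫ y in Ioc x x₀, gB y) + (∫ y in Ioi x₀, gB y) = ∫ y in Ioi x, gB y := by
          rw [← setIntegral_union (Ioc_disjoint_Ioi le_rfl) measurableSet_Ioi
            ((hgB x).mono_set Ioc_subset_Ioi_self) (hgB x₀), Ioc_union_Ioi_eq_Ioi hle]
        have hint_eq : (∫ y in x₀..x, gB y) = -∫ y in Ioc x x₀, gB y := by
          rw [intervalIntegral.integral_symm, intervalIntegral.integral_of_le hle]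
        rw [hBdef]; simp only; linarith
    have : HasDerivAt (fun x => B x₀ - ∫ y in x₀..x, gB y) (-(gB x₀)) x₀ := by
      simpa using (hftc.const_sub (B x₀))
    exact this.congr_of_eventuallyEq (Eventually.of_forall heq)
  -- assemble
  have hexp_neg : HasDerivAt (fun x : ℝ => Real.exp (-x)) (-Real.exp (-x₀)) x₀ := by
    have := ((hasDerivAt_id' x₀).neg).exp
    simpa using this
  have h1 : HasDerivAt (fun x => (-(1/2) * Real.exp (-x)) * A x)
      (((1/2) * Real.exp (-x₀)) * A x₀ + (-(1/2) * Real.exp (-x₀)) * gA x₀) x₀ := by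
    have hc1 : HasDerivAt (fun x : ℝ => -(1/2) * Real.exp (-x)) ((1/2) * Real.exp (-x₀)) x₀ := by
      have := hexp_neg.const_mul (-(1/2) : ℝ)
      rw [show (1/2:ℝ) * Real.exp (-x₀) = -(1/2) * -Real.exp (-x₀) by ring]; exact this
    exact hc1.mul hA'
  have h2 : HasDerivAt (fun x => ((1/2) * Real.exp x) * B x)
      (((1/2) * Real.exp x₀) * B x₀ + ((1/2) * Real.exp x₀) * (-(gB x₀))) x₀ := by
    have hc2 : HasDerivAt (fun x : ℝ => (1/2) * Real.exp x) ((1/2) * Real.exp x₀) x₀ :=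
      (Real.hasDerivAt_exp x₀).const_mul _
    exact hc2.mul hB'
  have hsum := h1.add h2
  have hfeq : (fun x => ∫ y, pker' (x - y) * φ y)
      = fun x => (-(1/2) * Real.exp (-x)) * A x + ((1/2) * Real.exp x) * B x :=
    funext claim_pker'
  rw [hfeq]
  have hval : ((1/2) * Real.exp (-x₀)) * A x₀ + (-(1/2) * Real.exp (-x₀)) * gA x₀
      + (((1/2) * Real.exp x₀) * B x₀ + ((1/2) * Real.exp x₀) * (-(gB x₀)))
      = (∫ y, pker (x₀ - y) * φ y) - φ x₀ := by
    rw [claim_pker x₀]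
    have he : Real.exp (-x₀) * Real.exp x₀ = 1 := by
      rw [← Real.exp_add]; simp
    rw [hgAdef, hgBdef]
    simp only
    linear_combination (-(φ x₀)) * he
  rw [← hval]
  exact hsum

lemma int_pow4 {f : ℝ → ℝ} (h4 : MemLp f 4 volume) : Integrable (fun y => (f y)^4) := by
  have h := h4.integrable_norm_rpow (by norm_num) (by norm_num)
  refine h.congr (Eventually.of_forall fun y => ?_)
  simp only
  rw [Real.norm_eq_abs]
  have h4e : ((4 : ℝ≥0∞).toReal) = ((4 : ℕ) : ℝ) := by norm_num
  rw [h4e, Real.rpow_natCast, ← abs_pow, abs_of_nonneg (by positivity)]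

lemma phi1_integrable {f g : ℝ → ℝ} (hf2 : MemLp f 2 volume) (hf4 : MemLp f 4 volume)
    (hg2 : MemLp g 2 volume) (hg4 : MemLp g 4 volume) :
    Integrable (fun y => (3/2) * f y * (g y)^2 + (f y)^3) := by
  have hsq : Integrable (fun y => (f y)^2) := hf2.integrable_sq
  have hf4' : Integrable (fun y => (f y)^4) := int_pow4 hf4
  have hg4' : Integrable (fun y => (g y)^4) := int_pow4 hg4
  have hdom : Integrable (fun y => 2*((f y)^2 + (f y)^4 + (g y)^4)) :=
    ((hsq.add hf4').add hg4').const_mul 2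
  have hm : AEStronglyMeasurable (fun y => (3/2) * f y * (g y)^2 + (f y)^3) volume :=
    (((hf2.aestronglyMeasurable.const_mul (3/2)).mul (hg2.aestronglyMeasurable.pow 2)).add
      (hf2.aestronglyMeasurable.pow 3))
  refine Integrable.mono' hdom hm (Eventually.of_forall fun y => ?_)
  rw [Real.norm_eq_abs]
  set a := f y; set b := g y
  rw [abs_le]
  constructor <;> nlinarith [sq_nonneg (a - b^2), sq_nonneg (a + b^2), sq_nonneg (a*(a-1)),
    sq_nonneg (a*(a+1)), sq_nonneg a, sq_nonneg b, sq_nonneg (a*a - 1), sq_nonneg (b*b - 1),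
    sq_nonneg (a*b)]

lemma phi2_integrable {g : ℝ → ℝ} (hg2 : MemLp g 2 volume) (hg4 : MemLp g 4 volume) :
    Integrable (fun y => (g y)^3) := by
  have hsq : Integrable (fun y => (g y)^2) := hg2.integrable_sq
  have hg4' : Integrable (fun y => (g y)^4) := int_pow4 hg4
  have hdom : Integrable (fun y => (g y)^2 + (g y)^4) := hsq.add hg4'
  refine Integrable.mono' hdom (hg2.aestronglyMeasurable.pow 3)
    (Eventually.of_forall fun y => ?_)
  rw [Real.norm_eq_abs]
  set b := g y
  rw [abs_le]
  constructor <;> nlinarith [sq_nonneg (b*(b-1)), sq_nonneg (b*(b+1)), sq_nonneg b]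

/-- **The second local conservation law.** For a smooth solution of the Novikov
equation on an open set `U`, the identity
`∂_t[u⁴ + 2u²u_x² − (1/3)u_x⁴] + ∂_x[2u⁴u_x² − (1/3)u²u_x⁴ + (4/3)u³(P₁+∂ₓP₂)]`
`+ (4/3)∂_x[(P₁+∂ₓP₂)² − (P₂+∂ₓP₁)²] = 0` holds pointwise on `U`. -/
theorem novikov_second_conservation_law (U : Set (ℝ × ℝ)) (u : ℝ → ℝ → ℝ)
    (h : NovikovSmoothSol U u) :
    ∀ t x : ℝ, (t, x) ∈ U →
      deriv (fun s => (u s x)^4 + 2 * (u s x)^2 * (uX u s x)^2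
          - (1/3) * (uX u s x)^4) t
        + deriv (fun y => 2 * (u t y)^4 * (uX u t y)^2
            - (1/3) * (u t y)^2 * (uX u t y)^4
            + (4/3) * (u t y)^3 * (NvP1 u t y + NvdP2 u t y)) x
        + (4/3) * deriv (fun y => (NvP1 u t y + NvdP2 u t y)^2
            - (NvP2 u t y + NvdP1 u t y)^2) x = 0 := by
  intro t x hU
  have hUopen := h.open_U
  set F : ℝ × ℝ → ℝ := fun q => u q.1 q.2 with hFdef
  have hFd : ∀ q ∈ U, HasFDerivAt F (fderiv ℝ F q) q := fun q hq =>
    ((h.smooth.contDiffAt (hUopen.mem_nhds hq)).differentiableAt (by simp)).hasFDerivAt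
  set Φ : ℝ × ℝ → (ℝ × ℝ →L[ℝ] ℝ) := fderiv ℝ F with hPhidef
  have hΦ : ContDiffOn ℝ (⊤ : ℕ∞) Φ U := h.smooth.fderiv_of_isOpen hUopen (by simp)
  have hΦdiff : DifferentiableAt ℝ Φ (t, x) :=
    (hΦ.contDiffAt (hUopen.mem_nhds hU)).differentiableAt (by simp)
  set Ψ : ℝ × ℝ →L[ℝ] (ℝ × ℝ →L[ℝ] ℝ) := fderiv ℝ Φ (t, x) with hPsidef
  have hΨ : HasFDerivAt Φ Ψ (t, x) := hΦdiff.hasFDerivAt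
  have hsymm : ∀ v w : ℝ × ℝ, Ψ v w = Ψ w v := fun v w =>
    second_derivative_symmetric_of_eventually
      (by filter_upwards [hUopen.mem_nhds hU] with q hq using hFd q hq) hΨ v w
  -- slice derivatives
  have hux : ∀ s y : ℝ, (s, y) ∈ U → HasDerivAt (u s) (Φ (s, y) (0, 1)) y := by
    intro s y hsy
    have hc : HasDerivAt (fun r : ℝ => ((s : ℝ), r)) ((0 : ℝ), (1 : ℝ)) y :=
      (hasDerivAt_const y s).prodMk (hasDerivAt_id y)
    exact (hFd (s, y) hsy).comp_hasDerivAt y hc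
  have huxval : ∀ s y : ℝ, (s, y) ∈ U → uX u s y = Φ (s, y) (0, 1) := fun s y hsy =>
    (hux s y hsy).deriv
  have hut' : ∀ s y : ℝ, (s, y) ∈ U → HasDerivAt (fun r => u r y) (Φ (s, y) (1, 0)) s := by
    intro s y hsy
    have hc : HasDerivAt (fun r : ℝ => (r, (y : ℝ))) ((1 : ℝ), (0 : ℝ)) s :=
      (hasDerivAt_id s).prodMk (hasDerivAt_const s y)
    exact (hFd (s, y) hsy).comp_hasDerivAt s hc
  -- neighbourhood facts
  have hUx : ∀ᶠ y in 𝓝 x, (t, y) ∈ U :=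
    ((continuous_const.prodMk continuous_id).continuousAt).preimage_mem_nhds
      (hUopen.mem_nhds hU)
  have hUt : ∀ᶠ s in 𝓝 t, (s, x) ∈ U :=
    ((continuous_id.prodMk continuous_const).continuousAt).preimage_mem_nhds
      (hUopen.mem_nhds hU)
  -- spatial derivatives of Φ-components
  have hΦx : HasDerivAt (fun y => Φ (t, y)) (Ψ ((0 : ℝ), (1 : ℝ))) x :=
    hΨ.comp_hasDerivAt x ((hasDerivAt_const x t).prodMk (hasDerivAt_id x))
  have hΦt : HasDerivAt (fun s => Φ (s, x)) (Ψ ((1 : ℝ), (0 : ℝ))) t :=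
    hΨ.comp_hasDerivAt t ((hasDerivAt_id t).prodMk (hasDerivAt_const t x))
  have hBx : HasDerivAt (uX u t) (Ψ (0, 1) (0, 1)) x := by
    have happ : HasDerivAt (fun y => Φ (t, y) ((0 : ℝ), (1 : ℝ))) (Ψ (0, 1) (0, 1)) x := by
      have := hΦx.clm_apply (hasDerivAt_const x ((0 : ℝ), (1 : ℝ)))
      simpa using this
    refine happ.congr_of_eventuallyEq ?_
    filter_upwards [hUx] with y hy using (huxval t y hy)
  have hHx : HasDerivAt (fun y => Φ (t, y) ((1 : ℝ), (0 : ℝ))) (Ψ (0, 1) (1, 0)) x := by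
    have := hΦx.clm_apply (hasDerivAt_const x ((1 : ℝ), (0 : ℝ)))
    simpa using this
  have hW0 : HasDerivAt (fun s => uX u s x) (Ψ (1, 0) (0, 1)) t := by
    have happ : HasDerivAt (fun s => Φ (s, x) ((0 : ℝ), (1 : ℝ))) (Ψ (1, 0) (0, 1)) t := by
      have := hΦt.clm_apply (hasDerivAt_const t ((0 : ℝ), (1 : ℝ)))
      simpa using this
    refine happ.congr_of_eventuallyEq ?_
    filter_upwards [hUt] with s hs using (huxval s x hs)
  -- convolution derivatives
  have hφ1 : Integrable (fun y => (3/2) * u t y * (uX u t y)^2 + (u t y)^3) :=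
    phi1_integrable (h.mem_L2 t) (h.mem_L4 t) (h.mem_L2x t) (h.mem_L4x t)
  have hφ2 : Integrable (fun y => (uX u t y)^3) :=
    phi2_integrable (h.mem_L2x t) (h.mem_L4x t)
  have hu_x : HasDerivAt (u t) (uX u t x) x := by
    rw [huxval t x hU]; exact hux t x hU
  have hcontu : ContinuousAt (u t) x := hu_x.continuousAt
  have hcontux : ContinuousAt (uX u t) x := hBx.continuousAt
  have hP1x : HasDerivAt (NvP1 u t) (NvdP1 u t x) x := conv_hasDerivAt hφ1 x
  have hP2x : HasDerivAt (NvP2 u t) (NvdP2 u t x) x := by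
    have := (conv_hasDerivAt hφ2 x).const_mul (1/2 : ℝ)
    exact this
  have hdP1 : HasDerivAt (NvdP1 u t)
      (NvP1 u t x - ((3/2) * u t x * (uX u t x)^2 + (u t x)^3)) x :=
    conv'_hasDerivAt hφ1 x
      (((continuousAt_const.mul hcontu).mul (hcontux.pow 2)).add (hcontu.pow 3))
  have hdP2 : HasDerivAt (NvdP2 u t) (NvP2 u t x - (1/2) * (uX u t x)^3) x := by
    have h0 := (conv'_hasDerivAt hφ2 x (hcontux.pow 3)).const_mul (1/2 : ℝ)
    have : (1/2 : ℝ) * ((∫ y, pker (x - y) * (uX u t y)^3) - (uX u t x)^3)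
        = NvP2 u t x - (1/2) * (uX u t x)^3 := by
      simp only [NvP2]; ring
    rw [this] at h0
    exact h0
  -- PDE on the time-t slice
  have hpde : ∀ y : ℝ, (t, y) ∈ U →
      Φ (t, y) (1, 0) = -((u t y)^2 * uX u t y) - NvdP1 u t y - NvP2 u t y := by
    intro y hy
    have he := h.eqn t y hy
    have hd := (hut' t y hy).deriv
    rw [hd] at he; linarith
  -- differentiate the PDE in x
  have hRHS := ((((hu_x.pow 2).mul hBx).neg).sub hdP1).sub hP2x
  have hmixed := hHx.unique (hRHS.congr_of_eventuallyEq
    (by filter_upwards [hUx] with y hy using hpde y hy))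
  have hW : HasDerivAt (fun s => uX u s x)
      (-((2 * u t x ^ (2-1) * uX u t x) * uX u t x + u t x ^ 2 * (Ψ (0, 1) (0, 1)))
        - (NvP1 u t x - ((3/2) * u t x * (uX u t x)^2 + (u t x)^3)) - NvdP2 u t x) t := by
    have hv : Ψ (1, 0) (0, 1)
        = -((2 * u t x ^ (2-1) * uX u t x) * uX u t x + u t x ^ 2 * (Ψ (0, 1) (0, 1)))
          - (NvP1 u t x - ((3/2) * u t x * (uX u t x)^2 + (u t x)^3)) - NvdP2 u t x :=
      (hsymm _ _).trans hmixed
    rw [← hv]; exact hW0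
  have hu_t : HasDerivAt (fun s => u s x)
      (-((u t x)^2 * uX u t x) - NvdP1 u t x - NvP2 u t x) t := by
    have h0 := hut' t x hU
    rw [hpde x hU] at h0
    exact h0
  -- assemble the three derivatives
  have hD1 := (((hu_t.pow 4).add (((hu_t.pow 2).const_mul 2).mul (hW.pow 2))).sub
      ((hW.pow 4).const_mul (1/3)) :
    HasDerivAt (fun s => (u s x)^4 + 2 * (u s x)^2 * (uX u s x)^2
      - (1/3) * (uX u s x)^4) _ t).deriv
  have hD2 := (((((hu_x.pow 4).const_mul 2).mul (hBx.pow 2)).sub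
      (((hu_x.pow 2).const_mul (1/3)).mul (hBx.pow 4))).add
      (((hu_x.pow 3).const_mul (4/3)).mul (hP1x.add hdP2)) :
    HasDerivAt (fun y => 2 * (u t y)^4 * (uX u t y)^2
      - (1/3) * (u t y)^2 * (uX u t y)^4
      + (4/3) * (u t y)^3 * (NvP1 u t y + NvdP2 u t y)) _ x).deriv
  have hD3 := ((((hP1x.add hdP2).pow 2).sub ((hP2x.add hdP1).pow 2) :
    HasDerivAt (fun y => (NvP1 u t y + NvdP2 u t y)^2
      - (NvP2 u t y + NvdP1 u t y)^2) _ x)).deriv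
  erw [hD1, hD2, hD3]
  norm_num
  ring_nf
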